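/- There exists a constant C > 0, depending only on H, such that for all 0 ≤ s < t ≤ 1, ∫₀^s (s−r)^{H−1/2} (t−r)^{H−3/2} dr ≤ C (t−s)^{2H−1}. Consequently, for each fixed s ∈ (0,1), the function t ↦ C(s,t) is differentiable on (s,1) with |∂_t C(s,t)| ≤ C' (t−s)^{2H−1} for a constant C' depending only on H. -/

import Mathlib

open MeasureTheory intervalIntegral

/-- The covariance function of the Riemann–Liouville fractional Brownian motion:
`C(s,t) = ∫₀^(min s t) (t-r)^(H-1/2) (s-r)^(H-1/2) dr`. -/
noncomputable def rlCov (H s t : ℝ) : ℝ :=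
  ∫ r in (0 : ℝ)..(min s t), (t - r) ^ (H - 1/2) * (s - r) ^ (H - 1/2)

lemma intSubRpow {p : ℝ} (hp : -1 < p) (c a b : ℝ) :
    IntervalIntegrable (fun r => (c - r) ^ p) volume a b := by
  simpa using (intervalIntegrable_rpow' hp (a := c - a) (b := c - b)).comp_sub_left c

lemma intgSubRpow {p : ℝ} (c a b : ℝ)
    (h : -1 < p ∨ p ≠ -1 ∧ 0 < c - a ∧ 0 < c - b) :
    ∫ r in a..b, (c - r) ^ p = ((c - a) ^ (p + 1) - (c - b) ^ (p + 1)) / (p + 1) := by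
  rw [intervalIntegral.integral_comp_sub_left (fun u => u ^ p) c]
  exact integral_rpow (h.imp id fun h' => ⟨h'.1, Set.notMem_uIcc_of_lt h'.2.2 h'.2.1⟩)

lemma part1 (H : ℝ) (hH0 : 0 < H) (hH1 : H < 1/2) :
    ∀ s t : ℝ, 0 ≤ s → s < t → t ≤ 1 →
    (∫ r in (0:ℝ)..s, (s - r) ^ (H - 1/2) * (t - r) ^ (H - 3/2))
      ≤ (1/(H + 1/2) + 2 ^ ((1:ℝ)/2 - H) * 2 ^ (2*H - 1) / (1 - 2*H)) * (t - s) ^ (2*H - 1) := by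
  intro s t hs hst ht
  have hp : (-1:ℝ) < H - 1/2 := by linarith
  have hts : (0:ℝ) < t - s := by linarith
  set m : ℝ := max 0 (2*s - t) with hm
  have hm0 : (0:ℝ) ≤ m := le_max_left _ _
  have hms : m ≤ s := max_le hs (by linarith)
  have hsm : s - m ≤ t - s := by
    rcases le_total 0 (2*s - t) with h | h
    · rw [hm, max_eq_right h]; linarith
    · rw [hm, max_eq_left h]; linarith
  have hcont : ContinuousOn (fun r => (t - r) ^ (H - 3/2)) (Set.Icc 0 s) := by
    apply ContinuousOn.rpow_const (continuous_const.sub continuous_id).continuousOn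
    intro r hr
    exact Or.inl (by have := hr.2; intro h; simp only [Pi.sub_apply, id_eq] at h; linarith [sub_eq_zero.mp h])
  have hf_int : IntervalIntegrable
      (fun r => (s - r) ^ (H - 1/2) * (t - r) ^ (H - 3/2)) volume 0 s :=
    (intSubRpow hp s 0 s).mul_continuousOn (by rw [Set.uIcc_of_le hs]; exact hcont)
  have hsub1 : Set.uIcc (0:ℝ) m ⊆ Set.uIcc 0 s := by
    rw [Set.uIcc_of_le hm0, Set.uIcc_of_le hs]; exact Set.Icc_subset_Icc le_rfl hms
  have hsub2 : Set.uIcc m s ⊆ Set.uIcc 0 s := by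
    rw [Set.uIcc_of_le hms, Set.uIcc_of_le hs]; exact Set.Icc_subset_Icc hm0 le_rfl
  have hsplit := intervalIntegral.integral_add_adjacent_intervals
    (hf_int.mono_set hsub1) (hf_int.mono_set hsub2)
  rw [← hsplit]
  -- bound on [m, s]
  have hb1 : (∫ r in m..s, (s - r) ^ (H - 1/2) * (t - r) ^ (H - 3/2))
      ≤ (t - s) ^ (2*H - 1) / (H + 1/2) := by
    have hg1_int : IntervalIntegrable
        (fun r => (s - r) ^ (H - 1/2) * (t - s) ^ (H - 3/2)) volume m s :=
      (intSubRpow hp s m s).mul_const _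
    have step1 : (∫ r in m..s, (s - r) ^ (H - 1/2) * (t - r) ^ (H - 3/2))
        ≤ ∫ r in m..s, (s - r) ^ (H - 1/2) * (t - s) ^ (H - 3/2) := by
      apply intervalIntegral.integral_mono_on hms (hf_int.mono_set hsub2) hg1_int
      intro r hr
      apply mul_le_mul_of_nonneg_left _ (Real.rpow_nonneg (by linarith [hr.2]) _)
      exact Real.rpow_le_rpow_of_nonpos hts (by linarith [hr.2]) (by linarith)
    have step2 : (∫ r in m..s, (s - r) ^ (H - 1/2) * (t - s) ^ (H - 3/2))
        = (s - m) ^ (H + 1/2) / (H + 1/2) * (t - s) ^ (H - 3/2) := by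
      rw [intervalIntegral.integral_mul_const, intgSubRpow s m s (Or.inl hp)]
      rw [sub_self, Real.zero_rpow (by intro h; simp at h; linarith)]
      rw [show H - 1/2 + 1 = H + 1/2 by ring]
      ring
    have step3 : (s - m) ^ (H + 1/2) ≤ (t - s) ^ (H + 1/2) :=
      Real.rpow_le_rpow (by linarith) hsm (by linarith)
    calc (∫ r in m..s, (s - r) ^ (H - 1/2) * (t - r) ^ (H - 3/2))
        ≤ (s - m) ^ (H + 1/2) / (H + 1/2) * (t - s) ^ (H - 3/2) := step2 ▸ step1
      _ ≤ (t - s) ^ (H + 1/2) / (H + 1/2) * (t - s) ^ (H - 3/2) := by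
          apply mul_le_mul_of_nonneg_right _ (Real.rpow_nonneg hts.le _)
          gcongr
      _ = (t - s) ^ (2*H - 1) / (H + 1/2) := by
          rw [div_mul_eq_mul_div, ← Real.rpow_add hts,
            show H + 1/2 + (H - 3/2) = 2*H - 1 by ring]
  -- bound on [0, m]
  have hb2 : (∫ r in (0:ℝ)..m, (s - r) ^ (H - 1/2) * (t - r) ^ (H - 3/2))
      ≤ 2 ^ ((1:ℝ)/2 - H) * 2 ^ (2*H - 1) / (1 - 2*H) * (t - s) ^ (2*H - 1) := by
    rcases le_or_gt (2*s - t) 0 with hcase | hcase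
    · rw [hm, max_eq_left hcase, intervalIntegral.integral_same]
      have h10 : (0:ℝ) < 1 - 2*H := by linarith
      positivity
    · have hm_eq : m = 2*s - t := by rw [hm, max_eq_right hcase.le]
      have key : ∀ r ∈ Set.Icc (0:ℝ) m,
          (s - r) ^ (H - 1/2) * (t - r) ^ (H - 3/2)
            ≤ 2 ^ ((1:ℝ)/2 - H) * (t - r) ^ (2*H - 2) := by
        intro r hr
        have hr2 : r ≤ 2*s - t := hm_eq ▸ hr.2
        have h3 : 0 < t - r := by linarith
        have h4 : (t - r)/2 ≤ s - r := by linarith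
        have h5 : (0:ℝ) < (t - r)/2 := by linarith
        calc (s - r) ^ (H - 1/2) * (t - r) ^ (H - 3/2)
            ≤ ((t - r)/2) ^ (H - 1/2) * (t - r) ^ (H - 3/2) := by
              apply mul_le_mul_of_nonneg_right _ (Real.rpow_nonneg h3.le _)
              exact Real.rpow_le_rpow_of_nonpos h5 h4 (by linarith)
          _ = 2 ^ ((1:ℝ)/2 - H) * (t - r) ^ (2*H - 2) := by
              rw [div_eq_mul_inv, Real.mul_rpow h3.le (by norm_num),
                Real.inv_rpow (by norm_num), ← Real.rpow_neg (by norm_num),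
                show -(H - 1/2) = (1:ℝ)/2 - H by ring,
                mul_comm ((t - r) ^ (H - 1/2)) _, mul_assoc, ← Real.rpow_add h3,
                show H - 1/2 + (H - 3/2) = 2*H - 2 by ring]
      have hg2_int : IntervalIntegrable
          (fun r => 2 ^ ((1:ℝ)/2 - H) * (t - r) ^ (2*H - 2)) volume 0 m := by
        apply ContinuousOn.intervalIntegrable
        apply ContinuousOn.mul continuousOn_const
        apply ContinuousOn.rpow_const (continuous_const.sub continuous_id).continuousOn
        intro r hr
        rw [Set.uIcc_of_le hm0] at hr
        exact Or.inl (by have h1 := hr.2; intro h; simp only [Pi.sub_apply, id_eq] at h; have := sub_eq_zero.mp h; linarith)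
      have step1 : (∫ r in (0:ℝ)..m, (s - r) ^ (H - 1/2) * (t - r) ^ (H - 3/2))
          ≤ ∫ r in (0:ℝ)..m, 2 ^ ((1:ℝ)/2 - H) * (t - r) ^ (2*H - 2) :=
        intervalIntegral.integral_mono_on hm0 (hf_int.mono_set hsub1) hg2_int key
      have hne : (2*H - 2 : ℝ) ≠ -1 := by intro h; linarith
      have htm : (0:ℝ) < t - m := by rw [hm_eq]; linarith
      have step2 : (∫ r in (0:ℝ)..m, 2 ^ ((1:ℝ)/2 - H) * (t - r) ^ (2*H - 2))
          = 2 ^ ((1:ℝ)/2 - H) * (((t - 0) ^ (2*H - 2 + 1) - (t - m) ^ (2*H - 2 + 1)) / (2*H - 2 + 1)) := by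
        rw [intervalIntegral.integral_const_mul, intgSubRpow t 0 m
          (Or.inr ⟨hne, by simpa using (by linarith : (0:ℝ) < t), htm⟩)]
      refine le_trans step1 ?_
      rw [step2]
      have h6 : t - m = 2*(t - s) := by rw [hm_eq]; ring
      have h7 : (t - m) ^ (2*H - 1) = 2 ^ (2*H - 1) * (t - s) ^ (2*H - 1) := by
        rw [h6, Real.mul_rpow (by norm_num) hts.le]
      have h8 : (0:ℝ) ≤ (t - 0) ^ (2*H - 1) := Real.rpow_nonneg (by linarith) _
      have h9 : (0:ℝ) < 2 ^ ((1:ℝ)/2 - H) := Real.rpow_pos_of_pos two_pos _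
      have h10 : (0:ℝ) < 1 - 2*H := by linarith
      rw [show (2*H - 2 + 1 : ℝ) = 2*H - 1 by ring]
      rw [show 2 ^ ((1:ℝ)/2 - H) * 2 ^ (2*H - 1) / (1 - 2*H) * (t - s) ^ (2*H - 1)
          = 2 ^ ((1:ℝ)/2 - H) * (2 ^ (2*H - 1) * (t - s) ^ (2*H - 1) / (1 - 2*H)) by ring, ← h7]
      apply mul_le_mul_of_nonneg_left _ h9.le
      have heq : ((t - 0) ^ (2*H - 1) - (t - m) ^ (2*H - 1)) / (2*H - 1)
          = ((t - m) ^ (2*H - 1) - (t - 0) ^ (2*H - 1)) / (1 - 2*H) := by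
        rw [div_eq_div_iff (by linarith) (by linarith)]; ring
      rw [heq]
      gcongr
      linarith [h8]
  calc (∫ r in (0:ℝ)..m, (s - r) ^ (H - 1/2) * (t - r) ^ (H - 3/2))
        + ∫ r in m..s, (s - r) ^ (H - 1/2) * (t - r) ^ (H - 3/2)
      ≤ 2 ^ ((1:ℝ)/2 - H) * 2 ^ (2*H - 1) / (1 - 2*H) * (t - s) ^ (2*H - 1)
        + (t - s) ^ (2*H - 1) / (H + 1/2) := add_le_add hb2 hb1
    _ = (1/(H + 1/2) + 2 ^ ((1:ℝ)/2 - H) * 2 ^ (2*H - 1) / (1 - 2*H)) * (t - s) ^ (2*H - 1) := by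
        ring

lemma aesmAux (s x p q K : ℝ) (hs : 0 ≤ s) (hsx : s < x) :
    AEStronglyMeasurable (fun r => K * (x - r) ^ p * (s - r) ^ q)
      (volume.restrict (Set.uIoc (0:ℝ) s)) := by
  have h_ne : ∀ᵐ (r : ℝ) ∂(volume.restrict (Set.uIoc (0:ℝ) s)), r ≠ s := by
    refine ae_restrict_of_ae ?_
    rw [ae_iff]
    have : {r : ℝ | ¬ r ≠ s} = {s} := by ext; simp
    rw [this]
    exact Real.volume_singleton
  have h_mem : ∀ᵐ r ∂(volume.restrict (Set.uIoc (0:ℝ) s)), r ∈ Set.uIoc (0:ℝ) s :=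
    ae_restrict_mem measurableSet_uIoc
  refine AEStronglyMeasurable.congr
    (f := fun r => K * Real.exp (Real.log (x - r) * p) * Real.exp (Real.log (s - r) * q)) ?_ ?_
  · exact (((measurable_const.mul
      ((((measurable_const.sub measurable_id).log).mul measurable_const).exp)).mul
      ((((measurable_const.sub measurable_id).log).mul measurable_const).exp))).aestronglyMeasurable
  · filter_upwards [h_ne, h_mem] with r hr1 hr2
    rw [Set.uIoc_of_le hs] at hr2
    have h1 : 0 < x - r := by linarith [hr2.2]
    have h2 : 0 < s - r := sub_pos.mpr (lt_of_le_of_ne hr2.2 hr1)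
    rw [Real.rpow_def_of_pos h1, Real.rpow_def_of_pos h2]

theorem rlCov_deriv_t_bound (H : ℝ) (hH0 : 0 < H) (hH1 : H < 1/2) :
    (∃ C > 0, ∀ s t : ℝ, 0 ≤ s → s < t → t ≤ 1 →
      (∫ r in (0 : ℝ)..s, (s - r) ^ (H - 1/2) * (t - r) ^ (H - 3/2))
        ≤ C * (t - s) ^ (2 * H - 1)) ∧
    (∃ C' > 0, ∀ s : ℝ, 0 < s → s < 1 → ∀ t : ℝ, s < t → t < 1 →
      DifferentiableAt ℝ (fun u => rlCov H s u) t ∧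
      |deriv (fun u => rlCov H s u) t| ≤ C' * (t - s) ^ (2 * H - 1)) := by
  have hC : (0:ℝ) < 1/(H + 1/2) + 2 ^ ((1:ℝ)/2 - H) * 2 ^ (2*H - 1) / (1 - 2*H) := by
    have h1 : (0:ℝ) < H + 1/2 := by linarith
    have h2 : (0:ℝ) < 1 - 2*H := by linarith
    have h3 : (0:ℝ) < 2 ^ ((1:ℝ)/2 - H) := Real.rpow_pos_of_pos two_pos _
    have h4 : (0:ℝ) < 2 ^ (2*H - 1) := Real.rpow_pos_of_pos two_pos _
    positivity
  constructor
  · exact ⟨_, hC, part1 H hH0 hH1⟩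
  · refine ⟨(1/2 - H) * (1/(H + 1/2) + 2 ^ ((1:ℝ)/2 - H) * 2 ^ (2*H - 1) / (1 - 2*H)),
      mul_pos (by linarith) hC, ?_⟩
    intro s hs0 hs1 t hst ht1
    have hp : (-1:ℝ) < H - 1/2 := by linarith
    have hts : (0:ℝ) < t - s := by linarith
    set ε : ℝ := (t - s)/2 with hε
    have hε_pos : 0 < ε := by rw [hε]; linarith
    -- differentiation under the integral sign
    have hder := intervalIntegral.hasDerivAt_integral_of_dominated_loc_of_deriv_le
      (F := fun x r => (x - r) ^ (H - 1/2) * (s - r) ^ (H - 1/2))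
      (F' := fun x r => (H - 1/2) * (x - r) ^ (H - 3/2) * (s - r) ^ (H - 1/2))
      (x₀ := t) (a := 0) (b := s) (μ := volume)
      (bound := fun r => (1/2 - H) * ((t - s)/2) ^ (H - 3/2) * (s - r) ^ (H - 1/2))
      (Metric.ball_mem_nhds t hε_pos) ?_ ?_ ?_ ?_ ?_ ?_
    · -- use the derivative
      obtain ⟨-, hG⟩ := hder
      have heq : (fun u => rlCov H s u)
          =ᶠ[nhds t] (fun x => ∫ r in (0:ℝ)..s, (x - r) ^ (H - 1/2) * (s - r) ^ (H - 1/2)) := by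
        filter_upwards [Ioi_mem_nhds hst] with u hu
        simp only [rlCov, min_eq_left (le_of_lt (show s < u from hu))]
      have hR := hG.congr_of_eventuallyEq heq
      refine ⟨hR.differentiableAt, ?_⟩
      rw [hR.deriv]
      have hDeq : (∫ r in (0:ℝ)..s, (H - 1/2) * (t - r) ^ (H - 3/2) * (s - r) ^ (H - 1/2))
          = (H - 1/2) * ∫ r in (0:ℝ)..s, (s - r) ^ (H - 1/2) * (t - r) ^ (H - 3/2) := by
        rw [← intervalIntegral.integral_const_mul]
        apply intervalIntegral.integral_congr
        intro r _
        ring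
      rw [hDeq, abs_mul, abs_of_neg (show H - 1/2 < 0 by linarith), abs_of_nonneg
        (intervalIntegral.integral_nonneg hs0.le (fun r hr => mul_nonneg
          (Real.rpow_nonneg (by linarith [hr.2]) _) (Real.rpow_nonneg (by linarith [hr.2]) _)))]
      have hI := part1 H hH0 hH1 s t hs0.le hst ht1.le
      calc -(H - 1/2) * ∫ r in (0:ℝ)..s, (s - r) ^ (H - 1/2) * (t - r) ^ (H - 3/2)
          = (1/2 - H) * ∫ r in (0:ℝ)..s, (s - r) ^ (H - 1/2) * (t - r) ^ (H - 3/2) := by ring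
        _ ≤ (1/2 - H) * ((1/(H + 1/2) + 2 ^ ((1:ℝ)/2 - H) * 2 ^ (2*H - 1) / (1 - 2*H))
              * (t - s) ^ (2*H - 1)) := mul_le_mul_of_nonneg_left hI (by linarith)
        _ = (1/2 - H) * (1/(H + 1/2) + 2 ^ ((1:ℝ)/2 - H) * 2 ^ (2*H - 1) / (1 - 2*H))
              * (t - s) ^ (2*H - 1) := by ring
    · -- measurability of F x for x near t
      filter_upwards [Ioi_mem_nhds hst] with x hx
      have := aesmAux s x (H - 1/2) (H - 1/2) 1 hs0.le hx
      simpa using this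
    · -- integrability of F t
      refine (intSubRpow hp s 0 s).continuousOn_mul ?_
      apply ContinuousOn.rpow_const (continuous_const.sub continuous_id).continuousOn
      intro r hr
      rw [Set.uIcc_of_le hs0.le] at hr
      refine Or.inl (fun h => ?_)
      simp only [Pi.sub_apply, id_eq] at h
      have := sub_eq_zero.mp h
      linarith [hr.2]
    · -- measurability of F' t
      exact aesmAux s t (H - 3/2) (H - 1/2) (H - 1/2) hs0.le hst
    · -- bound on F'
      refine Filter.Eventually.of_forall ?_
      intro r hr x hx
      rw [Set.uIoc_of_le hs0.le] at hr
      rw [Metric.mem_ball, Real.dist_eq] at hx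
      have hx1 : t - ε < x := by cases' abs_lt.mp hx with h1 h2; linarith
      have hxr : (t - s)/2 ≤ x - r := by
        have := hr.2
        rw [hε] at hx1
        linarith
      have hxr_pos : 0 < x - r := by linarith
      rw [Real.norm_eq_abs, abs_mul, abs_mul,
        abs_of_neg (show H - 1/2 < 0 by linarith),
        abs_of_nonneg (Real.rpow_nonneg hxr_pos.le _),
        abs_of_nonneg (Real.rpow_nonneg (by linarith [hr.2] : (0:ℝ) ≤ s - r) _)]
      apply mul_le_mul_of_nonneg_right _ (Real.rpow_nonneg (by linarith [hr.2]) _)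
      rw [show -(H - 1/2) = 1/2 - H by ring]
      apply mul_le_mul_of_nonneg_left _ (by linarith : (0:ℝ) ≤ 1/2 - H)
      exact Real.rpow_le_rpow_of_nonpos (by linarith) hxr (by linarith)
    · -- integrability of the bound
      exact (intSubRpow hp s 0 s).const_mul _
    · -- differentiability in x
      refine Filter.Eventually.of_forall ?_
      intro r hr x hx
      rw [Set.uIoc_of_le hs0.le] at hr
      rw [Metric.mem_ball, Real.dist_eq] at hx
      have hx1 : t - ε < x := by cases' abs_lt.mp hx with h1 h2; linarith
      have hxr : 0 < x - r := by
        have := hr.2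
        rw [hε] at hx1
        linarith
      have hd : HasDerivAt (fun y => (y - r) ^ (H - 1/2))
          (1 * (H - 1/2) * (x - r) ^ (H - 1/2 - 1)) x :=
        ((hasDerivAt_id x).sub_const r).rpow_const (Or.inl (ne_of_gt hxr))
      have hd2 := hd.mul_const ((s - r) ^ (H - 1/2))
      have : 1 * (H - 1/2) * (x - r) ^ (H - 1/2 - 1) * (s - r) ^ (H - 1/2)
          = (H - 1/2) * (x - r) ^ (H - 3/2) * (s - r) ^ (H - 1/2) := by
        rw [show H - 1/2 - 1 = H - 3/2 by ring]
        ring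
      exact hd2.congr_deriv this
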